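/- Let E11 ∈ ℝ^{n1×n1} be invertible, A12 ∈ ℝ^{n1×n2} have full column rank with A12ᵀE11⁻¹A12 invertible, and Π = I_{n1} − A12(A12ᵀE11⁻¹A12)⁻¹A12ᵀE11⁻¹. If a vector w ∈ ℝ^{n1^k} satisfies (Πᵀ)^{⊗k} w = w, then (I_{n1}^{⊗(i−1)} ⊗ A12ᵀ ⊗ I_{n1}^{⊗(k−i)}) w = 0 for every i = 1, …, k; equivalently, M_k(A12)ᵀ w = 0. -/

import Mathlib

open Matrix

noncomputable section

/-- Position-dependent Kronecker product of square matrices: the entry at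
row `r` and column `c` is `∏ j, F j (r j) (c j)`. -/
def posKron {n k : ℕ} (F : Fin k → Matrix (Fin n) (Fin n) ℝ) :
    Matrix (Fin k → Fin n) (Fin k → Fin n) ℝ :=
  Matrix.of fun r c => ∏ j, F j (r j) (c j)

/-- The `k`-fold Kronecker power `X^{⊗k}`. -/
def kronPow {n : ℕ} (k : ℕ) (X : Matrix (Fin n) (Fin n) ℝ) :
    Matrix (Fin k → Fin n) (Fin k → Fin n) ℝ :=
  posKron fun _ => X

/-- Number of columns of the `j`-th Kronecker factor in the `i`-th block of `M_k^B(A)`. -/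
def mCol (q p n : ℕ) {k : ℕ} (i j : Fin k) : ℕ :=
  if j < i then q else if j = i then p else n

/-- The `i`-th block `B^{⊗(i-1)} ⊗ A ⊗ I_n^{⊗(k-i)}` of `M_k^B(A)`. -/
def mBlock {n p q k : ℕ} (B : Matrix (Fin n) (Fin q) ℝ) (A : Matrix (Fin n) (Fin p) ℝ)
    (i : Fin k) : Matrix (Fin k → Fin n) (∀ j : Fin k, Fin (mCol q p n i j)) ℝ :=
  Matrix.of fun r c => ∏ j : Fin k,
    if h1 : j < i then B (r j) (Fin.cast (by simp [mCol, h1]) (c j))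
    else if h2 : j = i then A (r j) (Fin.cast (by simp [mCol, h1, h2]) (c j))
    else (1 : Matrix (Fin n) (Fin n) ℝ) (r j) (Fin.cast (by simp [mCol, h1, h2]) (c j))

/-- The horizontal block concatenation `M_k^B(A)`, with blocks indexed by `i : Fin k`. -/
def mFull {n p q : ℕ} (k : ℕ) (B : Matrix (Fin n) (Fin q) ℝ) (A : Matrix (Fin n) (Fin p) ℝ) :
    Matrix (Fin k → Fin n) (Σ i : Fin k, ∀ j : Fin k, Fin (mCol q p n i j)) ℝ :=
  Matrix.of fun r c => mBlock B A c.1 r c.2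

/-! Since `Π A12 = 0`, the mixed-product rule for Kronecker products gives
`Π^{⊗k} (I ⊗ ⋯ ⊗ A12 ⊗ ⋯ ⊗ I) = 0`; transposing and applying to `w = (Πᵀ)^{⊗k} w`
kills every block of `M_k(A12)ᵀ w`. -/

theorem one_sub_mul_inv_mul_mul_self {m n R : Type*} [Fintype m] [DecidableEq m] [Fintype n]
    [DecidableEq n] [CommRing R] (A : Matrix m n R) (B : Matrix n m R) (h : IsUnit (B * A)) :
    (1 - A * (B * A)⁻¹ * B) * A = 0 := by
  rw [Matrix.sub_mul, Matrix.one_mul, Matrix.mul_assoc, Matrix.mul_assoc,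
    nonsing_inv_mul _ ((isUnit_iff_isUnit_det _).mp h), Matrix.mul_one, sub_self]

theorem posKron_transpose {n k : ℕ} (F : Fin k → Matrix (Fin n) (Fin n) ℝ) :
    (posKron F)ᵀ = posKron fun j => (F j)ᵀ :=
  rfl

def piKron {ι : Type*} [Fintype ι] {m n : ι → Type*} {R : Type*} [CommSemiring R]
    (F : ∀ j, Matrix (m j) (n j) R) : Matrix (∀ j, m j) (∀ j, n j) R :=
  of fun r c => ∏ j, F j (r j) (c j)

theorem piKron_mul_piKron {ι : Type*} [Fintype ι] [DecidableEq ι] {l m n : ι → Type*}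
    [∀ j, Fintype (m j)] {R : Type*} [CommSemiring R]
    (F : ∀ j, Matrix (l j) (m j) R) (G : ∀ j, Matrix (m j) (n j) R) :
    piKron F * piKron G = piKron fun j => F j * G j := by
  ext r c
  simp only [piKron, mul_apply, of_apply, Fintype.prod_sum, Finset.prod_mul_distrib]

theorem piKron_eq_zero_of_eq_zero {ι : Type*} [Fintype ι] {m n : ι → Type*} {R : Type*}
    [CommSemiring R] (F : ∀ j, Matrix (m j) (n j) R) (i : ι) (hF : F i = 0) :
    piKron F = 0 := by
  ext r c
  exact Finset.prod_eq_zero (Finset.mem_univ i) (by rw [hF]; rfl)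

def mBlockFactor {n p q k : ℕ} (B : Matrix (Fin n) (Fin q) ℝ) (A : Matrix (Fin n) (Fin p) ℝ)
    (i j : Fin k) : Matrix (Fin n) (Fin (mCol q p n i j)) ℝ :=
  of fun y z =>
    if h1 : j < i then B y (Fin.cast (by simp [mCol, h1]) z)
    else if h2 : j = i then A y (Fin.cast (by simp [mCol, h2]) z)
    else (1 : Matrix (Fin n) (Fin n) ℝ) y (Fin.cast (by simp [mCol, h1, h2]) z)

theorem mBlock_eq_piKron {n p q k : ℕ} (B : Matrix (Fin n) (Fin q) ℝ)
    (A : Matrix (Fin n) (Fin p) ℝ) (i : Fin k) :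
    mBlock B A i = piKron (mBlockFactor B A i) :=
  rfl

theorem posKron_mul_mBlock_eq_zero {n p q k : ℕ} (F : Fin k → Matrix (Fin n) (Fin n) ℝ)
    (B : Matrix (Fin n) (Fin q) ℝ) (A : Matrix (Fin n) (Fin p) ℝ) (i : Fin k)
    (hFA : F i * A = 0) : posKron F * mBlock B A i = 0 := by
  rw [mBlock_eq_piKron, show posKron F = piKron F from rfl, piKron_mul_piKron]
  refine piKron_eq_zero_of_eq_zero _ i ?_
  ext y z
  simpa [mBlockFactor, mul_apply] using congrFun (congrFun hFA y) (Fin.cast (by simp [mCol]) z)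

theorem mBlock_transpose_mulVec_eq_zero {n p q k : ℕ} (P : Matrix (Fin n) (Fin n) ℝ)
    (B : Matrix (Fin n) (Fin q) ℝ) (A : Matrix (Fin n) (Fin p) ℝ) (hPA : P * A = 0)
    (w : (Fin k → Fin n) → ℝ) (hw : (kronPow k Pᵀ) *ᵥ w = w) (i : Fin k) :
    (mBlock B A i)ᵀ *ᵥ w = 0 := by
  rw [← hw, mulVec_mulVec, kronPow, ← posKron_transpose, ← transpose_mul,
    posKron_mul_mBlock_eq_zero _ B A i hPA, transpose_zero, zero_mulVec]

theorem mFull_transpose_mulVec_apply {n p q k : ℕ} (B : Matrix (Fin n) (Fin q) ℝ)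
    (A : Matrix (Fin n) (Fin p) ℝ) (w : (Fin k → Fin n) → ℝ)
    (c : Σ i : Fin k, ∀ j : Fin k, Fin (mCol q p n i j)) :
    ((mFull k B A)ᵀ *ᵥ w) c = ((mBlock B A c.1)ᵀ *ᵥ w) c.2 :=
  rfl

theorem stmt10_general {n1 n2 : ℕ} (E11 : Matrix (Fin n1) (Fin n1) ℝ)
    (A12 : Matrix (Fin n1) (Fin n2) ℝ)
    (hS : IsUnit (A12ᵀ * E11⁻¹ * A12))
    (Proj : Matrix (Fin n1) (Fin n1) ℝ)
    (hProj : Proj = 1 - A12 * (A12ᵀ * E11⁻¹ * A12)⁻¹ * A12ᵀ * E11⁻¹)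
    (k : ℕ) (w : (Fin k → Fin n1) → ℝ)
    (hw : (kronPow k Projᵀ).mulVec w = w) :
    (∀ i : Fin k,
        (mBlock (1 : Matrix (Fin n1) (Fin n1) ℝ) A12 i)ᵀ.mulVec w = 0)
    ∧ (mFull k (1 : Matrix (Fin n1) (Fin n1) ℝ) A12)ᵀ.mulVec w = 0 := by
  have hPA : Proj * A12 = 0 := by
    rw [hProj, Matrix.mul_assoc _ A12ᵀ]
    exact one_sub_mul_inv_mul_mul_self A12 (A12ᵀ * E11⁻¹) hS
  have hBlock :=
    mBlock_transpose_mulVec_eq_zero Proj (1 : Matrix (Fin n1) (Fin n1) ℝ) A12 hPA w hw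
  exact ⟨hBlock, funext fun c => by rw [mFull_transpose_mulVec_apply, hBlock]; rfl⟩

/-- With `Π = I - A12 (A12ᵀ E11⁻¹ A12)⁻¹ A12ᵀ E11⁻¹`: if `w ∈ ℝ^{n1^k}` satisfies
`(Πᵀ)^{⊗k} w = w`, then `(I^{⊗(i-1)} ⊗ A12ᵀ ⊗ I^{⊗(k-i)}) w = 0` for every
`i = 1, …, k`; equivalently `M_k(A12)ᵀ w = 0`. -/
theorem stmt10 {n1 n2 : ℕ} (E11 : Matrix (Fin n1) (Fin n1) ℝ) (hE : IsUnit E11)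
    (A12 : Matrix (Fin n1) (Fin n2) ℝ) (hA : A12.rank = n2)
    (hS : IsUnit (A12ᵀ * E11⁻¹ * A12))
    (Proj : Matrix (Fin n1) (Fin n1) ℝ)
    (hProj : Proj = 1 - A12 * (A12ᵀ * E11⁻¹ * A12)⁻¹ * A12ᵀ * E11⁻¹)
    (k : ℕ) (hk : 0 < k) (w : (Fin k → Fin n1) → ℝ)
    (hw : (kronPow k Projᵀ).mulVec w = w) :
    (∀ i : Fin k,
        (mBlock (1 : Matrix (Fin n1) (Fin n1) ℝ) A12 i)ᵀ.mulVec w = 0)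
    ∧ (mFull k (1 : Matrix (Fin n1) (Fin n1) ℝ) A12)ᵀ.mulVec w = 0 :=
  stmt10_general E11 A12 hS Proj hProj k w hw
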